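/- (Local Pohozaev identity.) Let a, b > 0, λ ≥ 0, r > 2, let V, W ∈ C¹(ℝ³, ℝ), let f : ℝ → ℝ be continuous with primitive F(u) = ∫₀^u f(s) ds, and let u ∈ C²(ℝ³) satisfy ∫_{ℝ³}|∇u|² < ∞ and solve pointwise −(a + bD)Δu + V(x)u + λW(x)u = f(u) + λ|u|^{r−2}u on ℝ³, where D = ∫_{ℝ³}|∇u|². Then for every vector t ∈ ℝ³ and every ψ ∈ C_c^∞(ℝ³): (1/2)∫ (t·∇V(x))u²ψ + (λ/2)∫ (t·∇W(x))u²ψ = −((a+bD)/2)∫ |∇u|² (t·∇ψ) + (a+bD)∫ (t·∇u)(∇u·∇ψ) − (1/2)∫ (V(x)+λW(x))u² (t·∇ψ) + ∫ (F(u) + (λ/r)|u|^r)(t·∇ψ), all integrals taken over ℝ³. -/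

import Mathlib

open MeasureTheory Filter Topology

noncomputable section

/-- `ℝ³`. -/
abbrev R3 : Type := EuclideanSpace ℝ (Fin 3)

/-- `F(u) = ∫₀ᵘ f(s) ds`, the primitive of `f` vanishing at `0`. -/
def primitive (f : ℝ → ℝ) (u : ℝ) : ℝ := ∫ s in (0:ℝ)..u, f s

/-- Test functions: smooth compactly supported functions on `ℝ³`. -/
def IsTestFun (φ : R3 → ℝ) : Prop := ContDiff ℝ (⊤ : ℕ∞) φ ∧ HasCompactSupport φ

/-- The Laplacian `Δu(x) = ∑ᵢ ∂ᵢ∂ᵢ u(x)` on `ℝ³`. -/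
def lap (u : R3 → ℝ) (x : R3) : ℝ :=
  ∑ i : Fin 3,
    fderiv ℝ (fun y : R3 => fderiv ℝ u y (EuclideanSpace.single i 1)) x
      (EuclideanSpace.single i 1)

namespace PohoAux

def e (i : Fin 3) : R3 := EuclideanSpace.single i (1:ℝ)

lemma integrable_mul_cs {h k : R3 → ℝ} (hh : Continuous h) (hk : Continuous k)
    (hks : HasCompactSupport k) : Integrable (fun x : R3 => h x * k x) :=
  (hh.mul hk).integrable_of_hasCompactSupport hks.mul_left

lemma cs_fderiv_apply {k : R3 → ℝ} (hks : HasCompactSupport k) (v : R3) :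
    HasCompactSupport (fun x : R3 => fderiv ℝ k x v) :=
  (hks.fderiv (𝕜 := ℝ)).comp_left (g := fun L : R3 →L[ℝ] ℝ => L v) rfl

/-- Integration by parts. -/
lemma ibp (v : R3) {g k : R3 → ℝ}
    (hg : Differentiable ℝ g) (hg' : Continuous fun x => fderiv ℝ g x v)
    (hk : Differentiable ℝ k) (hk' : Continuous fun x => fderiv ℝ k x v)
    (hks : HasCompactSupport k) :
    ∫ x : R3, fderiv ℝ g x v * k x = - ∫ x : R3, g x * fderiv ℝ k x v := by
  have hgc := hg.continuous
  have hkc := hk.continuous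
  have i1 : Integrable (fun x : R3 => fderiv ℝ g x v * k x) := integrable_mul_cs hg' hkc hks
  have i2 : Integrable (fun x : R3 => g x * fderiv ℝ k x v) :=
    integrable_mul_cs hgc hk' (cs_fderiv_apply hks v)
  have i3 : Integrable (fun x : R3 => g x * k x) := integrable_mul_cs hgc hkc hks
  have h := integral_mul_fderiv_eq_neg_fderiv_mul_of_integrable i1 i2 i3 (fun x _ => hg x) (fun x _ => hk x)
  linarith

lemma primitive_hasDerivAt {f : ℝ → ℝ} (hf : Continuous f) (y : ℝ) :
    HasDerivAt (primitive f) (f y) y := by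
  exact (intervalIntegral.integral_hasStrictDerivAt_right
    (hf.intervalIntegrable _ _)
    (hf.stronglyMeasurable.stronglyMeasurableAtFilter) hf.continuousAt).hasDerivAt

lemma abs_rpow_hasDerivAt {r : ℝ} (hr : 2 < r) (s : ℝ) :
    HasDerivAt (fun y : ℝ => |y| ^ r) (r * |s| ^ (r - 2) * s) s := by
  have key : ∀ q : ℝ, ∀ y : ℝ, ((y : ℝ) ^ 2) ^ q = |y| ^ (2 * q) := by
    intro q y
    rw [← sq_abs, ← Real.rpow_natCast |y| 2, ← Real.rpow_mul (abs_nonneg y)]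
    norm_num
  have h1 : HasDerivAt (fun y : ℝ => (y ^ 2 : ℝ)) (2 * s) s := by
    simpa using hasDerivAt_pow 2 s
  have h3 : HasDerivAt (fun y : ℝ => ((y ^ 2 : ℝ)) ^ (r / 2))
      ((2 * s) * (r / 2) * (s ^ 2) ^ (r / 2 - 1)) s :=
    h1.rpow_const (Or.inr (by linarith))
  have hfun : (fun y : ℝ => ((y ^ 2 : ℝ)) ^ (r / 2)) = fun y : ℝ => |y| ^ r := by
    funext y
    rw [key (r/2) y, show (2:ℝ)*(r/2) = r by ring]
  rw [show (fun y : ℝ => |y| ^ r) = fun y : ℝ => ((y ^ 2 : ℝ)) ^ (r / 2) from hfun.symm]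
  convert h3 using 1
  rw [key (r/2 - 1) s]
  have h4 : (2 : ℝ) * (r / 2 - 1) = r - 2 := by ring
  rw [h4]
  ring

lemma euclid_decomp (v : R3) : v = ∑ i, v i • e i := by
  have := (EuclideanSpace.basisFun (Fin 3) ℝ).sum_repr v
  simp only [EuclideanSpace.basisFun_apply, EuclideanSpace.basisFun_repr] at this
  exact this.symm

lemma clm_apply_eq_sum (ℓ : R3 →L[ℝ] ℝ) (v : R3) :
    ℓ v = ∑ i, v i * ℓ (e i) := by
  conv_lhs => rw [euclid_decomp v]
  rw [map_sum]
  simp [smul_eq_mul]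

lemma gradient_coord (u : R3 → ℝ) (x : R3) (i : Fin 3) :
    gradient u x i = fderiv ℝ u x (e i) := by
  have h : fderiv ℝ u x (e i) = inner ℝ (gradient u x) (e i) := by
    rw [gradient]
    exact (InnerProductSpace.toDual_symm_apply).symm
  rw [h]
  simp only [e, EuclideanSpace.inner_single_right]
  simp

lemma clm_apply_gradient (u : R3 → ℝ) (x : R3) (ℓ : R3 →L[ℝ] ℝ) :
    ℓ (gradient u x) = ∑ i, fderiv ℝ u x (e i) * ℓ (e i) := by
  rw [clm_apply_eq_sum ℓ (gradient u x)]
  exact Finset.sum_congr rfl fun i _ => by rw [gradient_coord]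

lemma norm_fderiv_sq (u : R3 → ℝ) (x : R3) :
    ‖fderiv ℝ u x‖ ^ 2 = ∑ i, (fderiv ℝ u x (e i)) ^ 2 := by
  have h1 : fderiv ℝ u x = (InnerProductSpace.toDual ℝ R3) (gradient u x) := by
    rw [gradient, LinearIsometryEquiv.apply_symm_apply]
  have h2 : ‖fderiv ℝ u x‖ = ‖gradient u x‖ := by
    rw [h1, LinearIsometryEquiv.norm_map]
  rw [h2, EuclideanSpace.norm_eq, Real.sq_sqrt (by positivity)]
  refine Finset.sum_congr rfl fun i _ => ?_
  rw [gradient_coord, Real.norm_eq_abs, sq_abs]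

end PohoAux

open PohoAux

/-- **Lemma 3.7 (local Pohozaev identity).** If `u ∈ C²` with `∫|∇u|² < ∞` solves the
perturbed Kirchhoff equation (K_λ) pointwise, then for every vector `t ∈ ℝ³` and every
test function `ψ`, the stated local Pohozaev-type identity holds. -/
theorem local_pohozaev_identity
    (a b lam r : ℝ) (ha : 0 < a) (hb : 0 < b) (hlam : 0 ≤ lam) (hr : 2 < r)
    (V W : R3 → ℝ) (hV : ContDiff ℝ 1 V) (hW : ContDiff ℝ 1 W)
    (f : ℝ → ℝ) (hf : Continuous f)
    (u : R3 → ℝ) (hu : ContDiff ℝ 2 u)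
    (hint : Integrable (fun x : R3 => ‖fderiv ℝ u x‖ ^ 2))
    (D : ℝ) (hD : D = ∫ x : R3, ‖fderiv ℝ u x‖ ^ 2)
    (heq : ∀ x : R3,
      -((a + b * D) * lap u x) + V x * u x + lam * W x * u x
        = f (u x) + lam * |u x| ^ (r - 2) * u x) :
    ∀ (t : R3) (ψ : R3 → ℝ), IsTestFun ψ →
      (1/2) * (∫ x : R3, fderiv ℝ V x t * (u x) ^ 2 * ψ x)
        + (lam/2) * (∫ x : R3, fderiv ℝ W x t * (u x) ^ 2 * ψ x)
      = -((a + b * D)/2) * (∫ x : R3, ‖fderiv ℝ u x‖ ^ 2 * fderiv ℝ ψ x t)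
        + (a + b * D) * (∫ x : R3, fderiv ℝ u x t * fderiv ℝ ψ x (gradient u x))
        - (1/2) * (∫ x : R3, (V x + lam * W x) * (u x) ^ 2 * fderiv ℝ ψ x t)
        + ∫ x : R3, (primitive f (u x) + (lam/r) * |u x| ^ r) * fderiv ℝ ψ x t := by
  intro t ψ hψ
  obtain ⟨hψs, hψcs⟩ := hψ
  -- ## basic differentiability and continuity facts
  have hud : Differentiable ℝ u := hu.differentiable (by norm_num)
  have hcu : Continuous u := hud.continuous
  have hu1 : ContDiff ℝ 1 (fderiv ℝ u) := hu.fderiv_right (by norm_num)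
  have hfuc : Continuous (fderiv ℝ u) := hu1.continuous
  have hfud : Differentiable ℝ (fderiv ℝ u) := hu1.differentiable one_ne_zero
  have hψd : Differentiable ℝ ψ := hψs.differentiable (by simp)
  have hψc : Continuous ψ := hψd.continuous
  have hψfc : Continuous (fderiv ℝ ψ) := hψs.continuous_fderiv (by simp)
  have hψ'c : ∀ v : R3, Continuous fun x => fderiv ℝ ψ x v := fun v =>
    hψfc.clm_apply continuous_const
  have fdc : ∀ {g : R3 → ℝ}, ContDiff ℝ 1 g → ∀ v : R3,
      Continuous fun x => fderiv ℝ g x v := fun hg v =>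
    (hg.continuous_fderiv one_ne_zero).clm_apply continuous_const
  -- directional derivatives of u
  have hp1 : ∀ w : R3, ContDiff ℝ 1 (fun x : R3 => fderiv ℝ u x w) := fun w =>
    (ContinuousLinearMap.apply ℝ ℝ w).contDiff.comp hu1
  have hpc : ∀ w : R3, Continuous (fun x : R3 => fderiv ℝ u x w) := fun w =>
    ((hp1 w).continuous)
  have hp' : ∀ (w : R3) (x : R3), HasFDerivAt (fun y : R3 => fderiv ℝ u y w)
      ((ContinuousLinearMap.apply ℝ ℝ w).comp (fderiv ℝ (fderiv ℝ u) x)) x := fun w x =>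
    (ContinuousLinearMap.apply ℝ ℝ w).hasFDerivAt.comp x (hfud x).hasFDerivAt
  have hpd : ∀ (w v : R3) (x : R3), fderiv ℝ (fun y : R3 => fderiv ℝ u y w) x v
      = fderiv ℝ (fderiv ℝ u) x v w := fun w v x => by rw [(hp' w x).fderiv]; rfl
  have hsym : ∀ (x : R3) (v w : R3),
      fderiv ℝ (fderiv ℝ u) x v w = fderiv ℝ (fderiv ℝ u) x w v := fun x =>
    hu.contDiffAt.isSymmSndFDerivAt (by simp)
  have hH2c : ∀ v w : R3, Continuous fun x => fderiv ℝ (fderiv ℝ u) x v w := fun v w =>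
    (((hu1.continuous_fderiv one_ne_zero).clm_apply continuous_const).clm_apply continuous_const)
  -- ## the function N = |∇u|²  (as a sum of squares)
  have hN1 : ContDiff ℝ 1 (fun x : R3 => ∑ i, (fderiv ℝ u x (e i)) ^ 2) :=
    ContDiff.sum fun i _ => (hp1 (e i)).pow 2
  have hN' : ∀ x : R3, HasFDerivAt (fun y : R3 => ∑ i, (fderiv ℝ u y (e i)) ^ 2)
      (∑ i, (2 * fderiv ℝ u x (e i)) •
        ((ContinuousLinearMap.apply ℝ ℝ (e i)).comp (fderiv ℝ (fderiv ℝ u) x))) x := by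
    intro x
    have := HasFDerivAt.sum (fun i (_ : i ∈ Finset.univ) =>
      ((hasDerivAt_pow 2 (fderiv ℝ u x (e i))).comp_hasFDerivAt x (hp' (e i) x)))
    simpa [pow_one, Function.comp_def, Finset.sum_fn] using this
  have hNval : ∀ x : R3, fderiv ℝ (fun y : R3 => ∑ i, (fderiv ℝ u y (e i)) ^ 2) x t
      = ∑ i, 2 * fderiv ℝ u x (e i) * fderiv ℝ (fderiv ℝ u) x t (e i) := by
    intro x
    rw [(hN' x).fderiv]
    simp [ContinuousLinearMap.sum_apply, mul_assoc]
  -- ## the test multiplier φ = (∂ₜu)·ψ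
  have hφd : Differentiable ℝ (fun x : R3 => fderiv ℝ u x t * ψ x) :=
    ((hp1 t).differentiable one_ne_zero).mul hψd
  have hφc : Continuous (fun x : R3 => fderiv ℝ u x t * ψ x) := hφd.continuous
  have hφcs : HasCompactSupport (fun x : R3 => fderiv ℝ u x t * ψ x) := hψcs.mul_left
  have hφ' : ∀ x : R3, HasFDerivAt (fun y : R3 => fderiv ℝ u y t * ψ y)
      ((fderiv ℝ u x t) • fderiv ℝ ψ x +
        ψ x • ((ContinuousLinearMap.apply ℝ ℝ t).comp (fderiv ℝ (fderiv ℝ u) x))) x :=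
    fun x => (hp' t x).mul (hψd x).hasFDerivAt
  have hφval : ∀ (x : R3) (v : R3), fderiv ℝ (fun y : R3 => fderiv ℝ u y t * ψ y) x v
      = fderiv ℝ u x t * fderiv ℝ ψ x v + ψ x * fderiv ℝ (fderiv ℝ u) x v t := by
    intro x v
    rw [(hφ' x).fderiv]
    simp
  have hφ'c : ∀ v : R3, Continuous fun x => fderiv ℝ (fun y : R3 => fderiv ℝ u y t * ψ y) x v := by
    intro v
    have : (fun x : R3 => fderiv ℝ (fun y : R3 => fderiv ℝ u y t * ψ y) x v)
        = fun x : R3 => fderiv ℝ u x t * fderiv ℝ ψ x v + ψ x * fderiv ℝ (fderiv ℝ u) x v t :=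
      funext fun x => hφval x v
    rw [this]
    exact ((hpc t).mul (hψ'c v)).add (hψc.mul (hH2c v t))
  -- ## integration by parts for the Laplacian term
  have hlap_ibp : ∫ x : R3, lap u x * (fderiv ℝ u x t * ψ x)
      = - ∑ i : Fin 3, ∫ x : R3,
          fderiv ℝ u x (e i) * fderiv ℝ (fun y : R3 => fderiv ℝ u y t * ψ y) x (e i) := by
    have h1 : ∀ i : Fin 3, ∫ x : R3,
        fderiv ℝ (fun y : R3 => fderiv ℝ u y (e i)) x (e i) * (fderiv ℝ u x t * ψ x)
        = - ∫ x : R3, fderiv ℝ u x (e i) *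
            fderiv ℝ (fun y : R3 => fderiv ℝ u y t * ψ y) x (e i) := fun i =>
      ibp (e i) ((hp1 (e i)).differentiable one_ne_zero) (fdc (hp1 (e i)) (e i))
        hφd (hφ'c (e i)) hφcs
    have h2 : (fun x : R3 => lap u x * (fderiv ℝ u x t * ψ x))
        = fun x : R3 => ∑ i : Fin 3,
            fderiv ℝ (fun y : R3 => fderiv ℝ u y (e i)) x (e i) * (fderiv ℝ u x t * ψ x) := by
      funext x
      rw [lap, Finset.sum_mul]
      rfl
    rw [h2, integral_finset_sum _ (fun i _ =>
      integrable_mul_cs (fdc (hp1 (e i)) (e i)) hφc hφcs)]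
    rw [Finset.sum_congr rfl fun i _ => h1 i]
    simp
  -- ## pointwise identity for the summed right-hand side
  have sum_pt : ∀ x : R3, ∑ i : Fin 3,
      fderiv ℝ u x (e i) * fderiv ℝ (fun y : R3 => fderiv ℝ u y t * ψ y) x (e i)
      = (1/2) * (fderiv ℝ (fun y : R3 => ∑ j, (fderiv ℝ u y (e j)) ^ 2) x t * ψ x)
        + fderiv ℝ u x t * fderiv ℝ ψ x (gradient u x) := by
    intro x
    rw [clm_apply_gradient u x (fderiv ℝ ψ x), hNval x]
    rw [Finset.mul_sum, Finset.sum_mul, Finset.mul_sum, ← Finset.sum_add_distrib]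
    refine Finset.sum_congr rfl fun i _ => ?_
    rw [hφval x (e i), hsym x t (e i)]
    ring
  -- continuity / support of the gradient pairing term
  have contGradu : Continuous (gradient u) := by
    have : gradient u = fun x => (InnerProductSpace.toDual ℝ R3).symm (fderiv ℝ u x) := rfl
    rw [this]
    exact (InnerProductSpace.toDual ℝ R3).symm.continuous.comp hfuc
  have contGrad : Continuous fun x : R3 => fderiv ℝ ψ x (gradient u x) :=
    hψfc.clm_apply contGradu
  have csGrad : HasCompactSupport (fun x : R3 => fderiv ℝ ψ x (gradient u x)) :=
    (hψcs.fderiv (𝕜 := ℝ)).mono (fun x hx => by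
      simp only [Function.mem_support] at hx ⊢
      intro h0
      apply hx
      rw [h0]
      simp)
  have intGrad : Integrable (fun x : R3 => fderiv ℝ u x t * fderiv ℝ ψ x (gradient u x)) :=
    integrable_mul_cs (hpc t) contGrad csGrad
  have csNψ : HasCompactSupport (fun x : R3 =>
      fderiv ℝ (fun y : R3 => ∑ j, (fderiv ℝ u y (e j)) ^ 2) x t * ψ x) := hψcs.mul_left
  have intNψ : Integrable (fun x : R3 => (1/2) *
      (fderiv ℝ (fun y : R3 => ∑ j, (fderiv ℝ u y (e j)) ^ 2) x t * ψ x)) :=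
    (continuous_const.mul ((fdc hN1 t).mul hψc)).integrable_of_hasCompactSupport csNψ.mul_left
  -- the key identity for the Laplacian integral
  have ibpN : ∫ x : R3, fderiv ℝ (fun y : R3 => ∑ j, (fderiv ℝ u y (e j)) ^ 2) x t * ψ x
      = - ∫ x : R3, (∑ j, (fderiv ℝ u x (e j)) ^ 2) * fderiv ℝ ψ x t :=
    ibp t (hN1.differentiable one_ne_zero) (fdc hN1 t) hψd (hψ'c t) hψcs
  have lap_eq : ∫ x : R3, lap u x * (fderiv ℝ u x t * ψ x)
      = (1/2) * (∫ x : R3, (∑ j, (fderiv ℝ u x (e j)) ^ 2) * fderiv ℝ ψ x t)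
        - (∫ x : R3, fderiv ℝ u x t * fderiv ℝ ψ x (gradient u x)) := by
    rw [hlap_ibp]
    rw [← integral_finset_sum _ (fun i _ => integrable_mul_cs (hpc (e i)) (hφ'c (e i))
      (cs_fderiv_apply hφcs (e i)))]
    rw [show (fun x : R3 => ∑ i : Fin 3,
          fderiv ℝ u x (e i) * fderiv ℝ (fun y : R3 => fderiv ℝ u y t * ψ y) x (e i))
        = fun x : R3 => (1/2) * (fderiv ℝ (fun y : R3 => ∑ j, (fderiv ℝ u y (e j)) ^ 2) x t * ψ x)
            + fderiv ℝ u x t * fderiv ℝ ψ x (gradient u x) from funext sum_pt]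
    rw [integral_add intNψ intGrad, integral_const_mul, ibpN]
    ring
  -- ## the potential term
  have hVc := hV.continuous
  have hWc := hW.continuous
  have hV't : Continuous fun x : R3 => fderiv ℝ V x t := fdc hV t
  have hW't : Continuous fun x : R3 => fderiv ℝ W x t := fdc hW t
  have hsq : ∀ x : R3, HasFDerivAt (fun y : R3 => u y ^ 2) ((2 * u x) • fderiv ℝ u x) x := by
    intro x
    have := (hasDerivAt_pow 2 (u x)).comp_hasFDerivAt x (hud x).hasFDerivAt
    simpa [pow_one, Function.comp_def] using this
  have hVW' : ∀ x : R3, HasFDerivAt (fun y : R3 => V y + lam * W y)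
      (fderiv ℝ V x + lam • fderiv ℝ W x) x := fun x =>
    ((hV.differentiable one_ne_zero x).hasFDerivAt).add
      (((hW.differentiable one_ne_zero x).hasFDerivAt).const_mul lam)
  have hP' : ∀ x : R3, HasFDerivAt (fun y : R3 => (V y + lam * W y) * u y ^ 2)
      ((V x + lam * W x) • ((2 * u x) • fderiv ℝ u x)
        + (u x ^ 2) • (fderiv ℝ V x + lam • fderiv ℝ W x)) x := fun x =>
    (hVW' x).mul (hsq x)
  have hPval : ∀ x : R3, fderiv ℝ (fun y : R3 => (V y + lam * W y) * u y ^ 2) x t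
      = (V x + lam * W x) * (2 * u x * fderiv ℝ u x t)
        + u x ^ 2 * (fderiv ℝ V x t + lam * fderiv ℝ W x t) := by
    intro x
    rw [(hP' x).fderiv]
    simp [smul_eq_mul]
    ring
  have hPdiff : Differentiable ℝ (fun y : R3 => (V y + lam * W y) * u y ^ 2) := fun x =>
    (hP' x).differentiableAt
  have hP'c : Continuous fun x : R3 => fderiv ℝ (fun y : R3 => (V y + lam * W y) * u y ^ 2) x t := by
    rw [show (fun x : R3 => fderiv ℝ (fun y : R3 => (V y + lam * W y) * u y ^ 2) x t)
        = fun x : R3 => (V x + lam * W x) * (2 * u x * fderiv ℝ u x t)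
            + u x ^ 2 * (fderiv ℝ V x t + lam * fderiv ℝ W x t) from funext hPval]
    exact ((hVc.add (continuous_const.mul hWc)).mul
      ((continuous_const.mul hcu).mul (hpc t))).add
      ((hcu.pow 2).mul (hV't.add (continuous_const.mul hW't)))
  have ibpP : (∫ x : R3, fderiv ℝ (fun y : R3 => (V y + lam * W y) * u y ^ 2) x t * ψ x)
      = - ∫ x : R3, (V x + lam * W x) * u x ^ 2 * fderiv ℝ ψ x t :=
    ibp t hPdiff hP'c hψd (hψ'c t) hψcs
  have expandP : (fun x : R3 => fderiv ℝ (fun y : R3 => (V y + lam * W y) * u y ^ 2) x t * ψ x)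
      = fun x : R3 => 2 * ((V x + lam * W x) * u x * fderiv ℝ u x t * ψ x)
          + (fderiv ℝ V x t * u x ^ 2 * ψ x + lam * (fderiv ℝ W x t * u x ^ 2 * ψ x)) :=
    funext fun x => by rw [hPval x]; ring
  have intA : Integrable (fun x : R3 => (V x + lam * W x) * u x * fderiv ℝ u x t * ψ x) :=
    integrable_mul_cs (((hVc.add (continuous_const.mul hWc)).mul hcu).mul (hpc t)) hψc hψcs
  have intI1 : Integrable (fun x : R3 => fderiv ℝ V x t * u x ^ 2 * ψ x) :=
    integrable_mul_cs (hV't.mul (hcu.pow 2)) hψc hψcs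
  have intI2 : Integrable (fun x : R3 => fderiv ℝ W x t * u x ^ 2 * ψ x) :=
    integrable_mul_cs (hW't.mul (hcu.pow 2)) hψc hψcs
  have eqC : 2 * (∫ x : R3, (V x + lam * W x) * u x * fderiv ℝ u x t * ψ x)
      + ((∫ x : R3, fderiv ℝ V x t * u x ^ 2 * ψ x)
        + lam * (∫ x : R3, fderiv ℝ W x t * u x ^ 2 * ψ x))
      = - ∫ x : R3, (V x + lam * W x) * u x ^ 2 * fderiv ℝ ψ x t := by
    have e1 : ∫ x : R3, (2 * ((V x + lam * W x) * u x * fderiv ℝ u x t * ψ x)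
        + (fderiv ℝ V x t * u x ^ 2 * ψ x + lam * (fderiv ℝ W x t * u x ^ 2 * ψ x)))
        = 2 * (∫ x : R3, (V x + lam * W x) * u x * fderiv ℝ u x t * ψ x)
          + ((∫ x : R3, fderiv ℝ V x t * u x ^ 2 * ψ x)
            + lam * (∫ x : R3, fderiv ℝ W x t * u x ^ 2 * ψ x)) := by
      have intI2' : Integrable (fun x : R3 => lam * (fderiv ℝ W x t * u x ^ 2 * ψ x)) :=
        intI2.const_mul lam
      have intI12 : Integrable (fun x : R3 => fderiv ℝ V x t * u x ^ 2 * ψ x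
          + lam * (fderiv ℝ W x t * u x ^ 2 * ψ x)) := intI1.add intI2'
      have intA2 : Integrable (fun x : R3 =>
          2 * ((V x + lam * W x) * u x * fderiv ℝ u x t * ψ x)) := intA.const_mul 2
      rw [integral_add intA2 intI12, integral_add intI1 intI2',
        integral_const_mul, integral_const_mul]
    rw [← e1, ← expandP]
    exact ibpP
  -- ## the nonlinear term
  have hr0 : r ≠ 0 := by linarith
  have contAbsR2 : Continuous fun x : R3 => |u x| ^ (r - 2) :=
    (Real.continuous_rpow_const (by linarith)).comp (hcu.abs)
  have hG' : ∀ x : R3, HasFDerivAt (fun y : R3 => primitive f (u y) + lam / r * |u y| ^ r)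
      ((f (u x)) • fderiv ℝ u x
        + (lam / r) • ((r * |u x| ^ (r - 2) * u x) • fderiv ℝ u x)) x := fun x =>
    ((primitive_hasDerivAt hf (u x)).comp_hasFDerivAt x (hud x).hasFDerivAt).add
      (((abs_rpow_hasDerivAt hr (u x)).comp_hasFDerivAt x (hud x).hasFDerivAt).const_mul (lam / r))
  have hGval : ∀ x : R3, fderiv ℝ (fun y : R3 => primitive f (u y) + lam / r * |u y| ^ r) x t
      = (f (u x) + lam * |u x| ^ (r - 2) * u x) * fderiv ℝ u x t := by
    intro x
    rw [(hG' x).fderiv]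
    simp [smul_eq_mul]
    field_simp
  have hGdiff : Differentiable ℝ (fun y : R3 => primitive f (u y) + lam / r * |u y| ^ r) :=
    fun x => (hG' x).differentiableAt
  have hG'c : Continuous fun x : R3 =>
      fderiv ℝ (fun y : R3 => primitive f (u y) + lam / r * |u y| ^ r) x t := by
    rw [show (fun x : R3 => fderiv ℝ (fun y : R3 => primitive f (u y) + lam / r * |u y| ^ r) x t)
        = fun x : R3 => (f (u x) + lam * |u x| ^ (r - 2) * u x) * fderiv ℝ u x t
        from funext hGval]
    exact (((hf.comp hcu).add ((continuous_const.mul contAbsR2).mul hcu)).mul (hpc t))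
  have ibpG : (∫ x : R3, fderiv ℝ (fun y : R3 => primitive f (u y) + lam / r * |u y| ^ r) x t * ψ x)
      = - ∫ x : R3, (primitive f (u x) + lam / r * |u x| ^ r) * fderiv ℝ ψ x t :=
    ibp t hGdiff hG'c hψd (hψ'c t) hψcs
  have eqG : (∫ x : R3, (f (u x) + lam * |u x| ^ (r - 2) * u x) * fderiv ℝ u x t * ψ x)
      = - ∫ x : R3, (primitive f (u x) + lam / r * |u x| ^ r) * fderiv ℝ ψ x t := by
    rw [show (fun x : R3 => (f (u x) + lam * |u x| ^ (r - 2) * u x) * fderiv ℝ u x t * ψ x)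
        = fun x : R3 => fderiv ℝ (fun y : R3 => primitive f (u y) + lam / r * |u y| ^ r) x t * ψ x
        from funext fun x => by rw [hGval x]]
    exact ibpG
  -- ## using the equation
  have contLap : Continuous (lap u) :=
    continuous_finset_sum _ (fun i _ => fdc (hp1 (e i)) (e i))
  have intLapφ : Integrable (fun x : R3 => lap u x * (fderiv ℝ u x t * ψ x)) :=
    integrable_mul_cs contLap hφc hφcs
  have intQ : Integrable (fun x : R3 =>
      (f (u x) + lam * |u x| ^ (r - 2) * u x) * fderiv ℝ u x t * ψ x) :=
    integrable_mul_cs (((hf.comp hcu).add ((continuous_const.mul contAbsR2).mul hcu)).mul (hpc t))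
      hψc hψcs
  have eqMain : (a + b * D) * (∫ x : R3, lap u x * (fderiv ℝ u x t * ψ x))
      = (∫ x : R3, (V x + lam * W x) * u x * fderiv ℝ u x t * ψ x)
        - ∫ x : R3, (f (u x) + lam * |u x| ^ (r - 2) * u x) * fderiv ℝ u x t * ψ x := by
    rw [← integral_const_mul (a + b * D), ← integral_sub intA intQ]
    exact integral_congr_ae (Filter.Eventually.of_forall fun x => by
      linear_combination (-(fderiv ℝ u x t * ψ x)) * heq x)
  -- ## final assembly
  have normEq : (∫ x : R3, ‖fderiv ℝ u x‖ ^ 2 * fderiv ℝ ψ x t)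
      = ∫ x : R3, (∑ j, (fderiv ℝ u x (e j)) ^ 2) * fderiv ℝ ψ x t := by
    rw [show (fun x : R3 => ‖fderiv ℝ u x‖ ^ 2 * fderiv ℝ ψ x t)
        = fun x : R3 => (∑ j, (fderiv ℝ u x (e j)) ^ 2) * fderiv ℝ ψ x t
        from funext fun x => by rw [norm_fderiv_sq]]
  rw [normEq]
  linear_combination (1/2) * eqC + eqMain - (a + b * D) * lap_eq - eqG
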